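/- Let P(t) be a rational parametrization of C such that the reparametrizing curve 𝔊(P) has at least one rational component M, and let (φ₁(t), φ₂(t)) ∈ K(t)² be a rational parametrization of M. Then the reparametrization P(φ₁(t)) is A-rdf; explicitly, φ₂ is not identically zero and (P₁(φ₁(t))−a)² + (P₂(φ₁(t))−b)² = ((φ₂(t)²+1)² / (2φ₂(t))²)·(P₂(φ₁(t))−b)². -/

import Mathlib

noncomputable section

namespace ConchoidPaper

open Polynomial

variable {K : Type*} [Field K]

/-- The squared norm `‖P‖² = b(P,P)` for the bilinear form
`b((x₁,x₂),(y₁,y₂)) = x₁y₁ + x₂y₂` on `K²`. -/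
def normSq (P : K × K) : K := P.1 * P.1 + P.2 * P.2

/-- The zero set in `K²` of a bivariate polynomial (variables `X 0 ↦ y₁`, `X 1 ↦ y₂`). -/
def zeroSet (f : MvPolynomial (Fin 2) K) : Set (K × K) :=
  {x | MvPolynomial.eval ![x.1, x.2] f = 0}

/-- Zariski closure in `K²`: the set of points at which every polynomial
vanishing identically on `S` vanishes. -/
def zClosure (S : Set (K × K)) : Set (K × K) :=
  {x | ∀ f : MvPolynomial (Fin 2) K,
      (∀ y ∈ S, MvPolynomial.eval ![y.1, y.2] f = 0) →
      MvPolynomial.eval ![x.1, x.2] f = 0}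

/-- `S` is Zariski closed in `K²`. -/
def IsZClosed (S : Set (K × K)) : Prop := zClosure S ⊆ S

/-- `S` is irreducible for the Zariski topology on `K²`: it is nonempty and is not
covered by two Zariski-closed sets unless it is contained in one of them. -/
def IsZIrreducible (S : Set (K × K)) : Prop :=
  S.Nonempty ∧
  ∀ F₁ F₂ : Set (K × K), IsZClosed F₁ → IsZClosed F₂ → S ⊆ F₁ ∪ F₂ → S ⊆ F₁ ∨ S ⊆ F₂

/-- `M` is an irreducible component of `X`: a maximal Zariski-closed irreducible subset. -/
def IsComponent (X M : Set (K × K)) : Prop :=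
  M ⊆ X ∧ IsZClosed M ∧ IsZIrreducible M ∧
  ∀ M' : Set (K × K), M' ⊆ X → IsZClosed M' → IsZIrreducible M' → M ⊆ M' → M' = M

/-- `Ω` is a nonempty Zariski-dense subset of `M`. -/
def IsDenseIn (Ω M : Set (K × K)) : Prop :=
  Ω.Nonempty ∧ Ω ⊆ M ∧ M ⊆ zClosure Ω

/-- The conchoid incidence variety `B(C)` of the curve `C = zeroSet f` from the focus `A`
at distance `d`: triples `(x̄, ȳ, λ)` with `f(ȳ) = 0`, `‖x̄ − ȳ‖² = d²` and
`x̄ = A + λ(ȳ − A)`. -/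
def incidence (f : MvPolynomial (Fin 2) K) (A : K × K) (d : K) :
    Set ((K × K) × (K × K) × K) :=
  {w | w.2.1 ∈ zeroSet f ∧ normSq (w.1 - w.2.1) = d ^ 2 ∧ w.1 = A + w.2.2 • (w.2.1 - A)}

/-- The conchoid `𝔠(C,A,d)`: the Zariski closure of `π₁(B(C))`. -/
def conchoid (f : MvPolynomial (Fin 2) K) (A : K × K) (d : K) : Set (K × K) :=
  zClosure (Prod.fst '' incidence f A d)

/-- `S` is one of the two isotropic lines `y₁ ± √(-1) y₂ = 0`. -/
def IsIsotropicLine (S : Set (K × K)) : Prop :=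
  ∃ s : K, s ^ 2 = -1 ∧ S = {y : K × K | y.1 + s * y.2 = 0}

/-- `S` is a line passing through the point `A`. -/
def IsLineThrough (S : Set (K × K)) (A : K × K) : Prop :=
  ∃ u v : K, (u ≠ 0 ∨ v ≠ 0) ∧
    S = {y : K × K | u * (y.1 - A.1) + v * (y.2 - A.2) = 0}

/-- `S` is a line in `K²`. -/
def IsLine (S : Set (K × K)) : Prop :=
  ∃ u v w : K, (u ≠ 0 ∨ v ≠ 0) ∧ S = {y : K × K | u * y.1 + v * y.2 + w = 0}

/-- The circle of center `A` and radius `d`, i.e. `‖ȳ − A‖² = d²`. -/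
def circleSet (A : K × K) (d : K) : Set (K × K) := {y : K × K | normSq (y - A) = d ^ 2}

/-- The point of `K²` obtained by evaluating the pair of rational functions `P` at `t`. -/
def ratPoint (P : RatFunc K × RatFunc K) (t : K) : K × K :=
  (P.1.num.eval t / P.1.denom.eval t, P.2.num.eval t / P.2.denom.eval t)

/-- `t` avoids the poles of both components of `P`. -/
def PolesAvoided (P : RatFunc K × RatFunc K) (t : K) : Prop :=
  P.1.denom.eval t ≠ 0 ∧ P.2.denom.eval t ≠ 0

/-- The image of the pair of rational functions `P`, poles avoided. -/
def paramImage (P : RatFunc K × RatFunc K) : Set (K × K) :=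
  {x | ∃ t : K, PolesAvoided P t ∧ x = ratPoint P t}

/-- `P ∈ K(t)²` is a rational parametrization of the set `S ⊆ K²`: its components are
not both constant, its image lies in `S`, and its image is Zariski dense in `S`. -/
def IsParamOf (S : Set (K × K)) (P : RatFunc K × RatFunc K) : Prop :=
  (¬ ∃ c : K × K, P.1 = RatFunc.C c.1 ∧ P.2 = RatFunc.C c.2) ∧
  paramImage P ⊆ S ∧ S ⊆ zClosure (paramImage P)

/-- `S` is rational: it admits a rational parametrization. -/
def IsRationalSet (S : Set (K × K)) : Prop := ∃ P : RatFunc K × RatFunc K, IsParamOf S P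

/-- `P` is proper: `K(P₁,P₂) = K(t)`. -/
def IsProper (P : RatFunc K × RatFunc K) : Prop :=
  IntermediateField.adjoin K {P.1, P.2} = ⊤

/-- `P` is at rational distance to the focus `A` (`A`-rdf):
`(P₁ − a)² + (P₂ − b)² = m(t)²` for some rational function `m`. -/
def IsRDF (A : K × K) (P : RatFunc K × RatFunc K) : Prop :=
  ∃ m : RatFunc K, (P.1 - RatFunc.C A.1) ^ 2 + (P.2 - RatFunc.C A.2) ^ 2 = m ^ 2

/-- A field is trivially a normalized GCD monoid; this makes `K[x₁]` a normalized GCD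
monoid, so that primitive parts w.r.t. `x₂` of polynomials in `K[x₁][x₂]` make sense. -/
noncomputable local instance : NormalizedGCDMonoid K := by
  classical exact
    letI := CommGroupWithZero.instStrongNormalizedGCDMonoid K; inferInstance

/-- The numerator of `−2x₂(P₁(x₁) − a) + (x₂² − 1)(P₂(x₁) − b)`, written as a polynomial
in `x₂` (outer variable) with coefficients in `K[x₁]` (inner variable). -/
def repNum (A : K × K) (P : RatFunc K × RatFunc K) : Polynomial (Polynomial K) :=
  Polynomial.C ((P.2 - RatFunc.C A.2).num * (P.1 - RatFunc.C A.1).denom) *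
      (Polynomial.X ^ 2 - 1) +
    Polynomial.C (-2 * ((P.1 - RatFunc.C A.1).num * (P.2 - RatFunc.C A.2).denom)) *
      Polynomial.X

/-- Defining polynomial of the reparametrizing curve `𝔊(P)`: the primitive part with
respect to `x₂` of the numerator of `−2x₂(P₁(x₁) − a) + (x₂² − 1)(P₂(x₁) − b)`. -/
def repPoly (A : K × K) (P : RatFunc K × RatFunc K) : Polynomial (Polynomial K) :=
  (repNum A P).primPart

/-- Zero set in the `(x₁,x₂)`-plane of `g ∈ K[x₁][x₂]` (`x₂` outer, `x₁` inner). -/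
def zeroSetP (g : Polynomial (Polynomial K)) : Set (K × K) :=
  {x | Polynomial.eval₂ (Polynomial.evalRingHom x.1) x.2 g = 0}

/-- The reparametrizing curve `𝔊(P)` has at least one rational component, i.e. some
irreducible factor of its defining polynomial defines a rational curve. -/
def repHasRatComponent (A : K × K) (P : RatFunc K × RatFunc K) : Prop :=
  ∃ g : Polynomial (Polynomial K), Irreducible g ∧ g ∣ repPoly A P ∧
    IsRationalSet (zeroSetP g)

/-- The reparametrizing curve `𝔊(P)` is rational: its defining polynomial is
irreducible and its zero set admits a rational parametrization. -/
def repIsRational (A : K × K) (P : RatFunc K × RatFunc K) : Prop :=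
  Irreducible (repPoly A P) ∧ IsRationalSet (zeroSetP (repPoly A P))

/-- Composition `P ∘ φ` of rational functions. -/
def comp (P φ : RatFunc K) : RatFunc K :=
  Polynomial.aeval φ P.num / Polynomial.aeval φ P.denom

/-- `M` is a simple component of the conchoid: an irreducible component possessing a
nonempty Zariski-dense subset `Ω` such that each `Q ∈ Ω` has exactly one point in
`π₂(π₁⁻¹(Q))`. -/
def IsSimpleComponent (f : MvPolynomial (Fin 2) K) (A : K × K) (d : K)
    (M : Set (K × K)) : Prop :=
  IsComponent (conchoid f A d) M ∧
  ∃ Ω : Set (K × K), IsDenseIn Ω M ∧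
    ∀ Q ∈ Ω, ∃! y : K × K, ∃ l : K, (Q, y, l) ∈ incidence f A d

/-! A point `(φ₁, φ₂)` of `𝔊(P)` says that `P(φ₁) − A` is proportional to `(2φ₂, φ₂² − 1)`, and
`(2w)² + (w² − 1)² = (w² + 1)²` then makes its squared length a square. The pointwise incidence
`(φ₁(t), φ₂(t)) ∈ 𝔊(P)` becomes an identity of rational functions because it holds for all but
finitely many `t`. Of the degenerate cases, `φ₁` constant is excluded by primitivity of the
defining polynomial of `𝔊(P)`, and `φ₂ = 0` would force `P₂ ≡ b`, making `C` the line `y₂ = b`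
through `A`. -/

theorem eventually_cofinite_eval_ne_zero {p : K[X]} (hp : p ≠ 0) :
    ∀ᶠ t in Filter.cofinite, p.eval t ≠ 0 :=
  Filter.eventually_cofinite.mpr (by simpa using Polynomial.finite_setOfPred_isRoot hp)

def regularAt (t : K) : Subalgebra K (RatFunc K) where
  carrier := {x | x.denom.eval t ≠ 0}
  mul_mem' {x y} hx hy := by
    refine mt (eval_eq_zero_of_dvd_of_eval_eq_zero (RatFunc.denom_mul_dvd x y)) ?_
    simpa using mul_ne_zero hx hy
  add_mem' {x y} hx hy := by
    refine mt (eval_eq_zero_of_dvd_of_eval_eq_zero (RatFunc.denom_add_dvd x y)) ?_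
    simpa using mul_ne_zero hx hy
  algebraMap_mem' c := by simp [RatFunc.algebraMap_eq_C]

theorem eventually_mem_regularAt (x : RatFunc K) : ∀ᶠ t in Filter.cofinite, x ∈ regularAt t :=
  eventually_cofinite_eval_ne_zero (RatFunc.denom_ne_zero x)

def evalAt (t : K) : regularAt t →ₐ[K] K where
  toFun x := RatFunc.eval (RingHom.id K) t x
  map_one' := RatFunc.eval_one _ _
  map_mul' x y := RatFunc.eval_mul _ _ x.2 y.2
  map_zero' := RatFunc.eval_zero _ _
  map_add' x y := RatFunc.eval_add _ _ x.2 y.2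
  commutes' c := by simp [RatFunc.algebraMap_eq_C]

theorem ratPoint_eq (P : RatFunc K × RatFunc K) (t : K) :
    ratPoint P t = (RatFunc.eval (RingHom.id K) t P.1, RatFunc.eval (RingHom.id K) t P.2) := rfl

theorem eq_zero_of_eventually_eval_eq_zero [Infinite K] {x : RatFunc K}
    (h : ∀ᶠ t in Filter.cofinite, RatFunc.eval (RingHom.id K) t x = 0) : x = 0 := by
  rw [← RatFunc.num_eq_zero_iff]
  refine eq_zero_of_infinite_isRoot _ (Filter.frequently_cofinite_iff_infinite.mp ?_)
  refine (h.and (eventually_mem_regularAt x)).frequently.mono fun t ⟨hx, hden⟩ => ?_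
  exact (div_eq_zero_iff.mp hx).resolve_right hden

def evalPair {A : Type*} [CommRing A] [Algebra K A] (a : A × A) : K[X][X] →+* A :=
  eval₂RingHom (aeval a.1).toRingHom a.2

theorem map_evalPair {A B : Type*} [CommRing A] [Algebra K A] [CommRing B] [Algebra K B]
    (ψ : A →ₐ[K] B) (a : A × A) (g : K[X][X]) :
    ψ (evalPair a g) = evalPair (ψ a.1, ψ a.2) g := by
  simp only [evalPair, coe_eval₂RingHom, aeval_algHom]
  exact hom_eval₂ g _ ψ.toRingHom a.2

theorem mem_zeroSetP_iff {g : K[X][X]} {x : K × K} : x ∈ zeroSetP g ↔ evalPair x g = 0 := by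
  have : (aeval x.1).toRingHom = evalRingHom x.1 := RingHom.ext fun p => by simp
  rw [zeroSetP, Set.mem_ofPred_eq, evalPair, coe_eval₂RingHom, this]

theorem mem_zeroSet_iff {f : MvPolynomial (Fin 2) K} {x : K × K} :
    x ∈ zeroSet f ↔ MvPolynomial.aeval ![x.1, x.2] f = 0 :=
  Iff.rfl

theorem map_mvAeval {A B : Type*} [CommRing A] [Algebra K A] [CommRing B] [Algebra K B]
    (ψ : A →ₐ[K] B) (a : A × A) (f : MvPolynomial (Fin 2) K) :
    ψ (MvPolynomial.aeval ![a.1, a.2] f) = MvPolynomial.aeval ![ψ a.1, ψ a.2] f := by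
  rw [MvPolynomial.comp_aeval_apply]
  congr 2 with i
  fin_cases i <;> rfl

theorem eval_evalPair {φ : RatFunc K × RatFunc K} {t : K} (h₁ : φ.1 ∈ regularAt t)
    (h₂ : φ.2 ∈ regularAt t) (g : K[X][X]) :
    RatFunc.eval (RingHom.id K) t (evalPair φ g) = evalPair (ratPoint φ t) g := by
  have hval : ((evalPair (⟨φ.1, h₁⟩, ⟨φ.2, h₂⟩) g : regularAt t) : RatFunc K) = evalPair φ g :=
    map_evalPair (regularAt t).val _ g
  rw [← hval]
  exact map_evalPair (evalAt t) _ g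

theorem eval_mvAeval {P : RatFunc K × RatFunc K} {t : K} (h₁ : P.1 ∈ regularAt t)
    (h₂ : P.2 ∈ regularAt t) (f : MvPolynomial (Fin 2) K) :
    RatFunc.eval (RingHom.id K) t (MvPolynomial.aeval ![P.1, P.2] f)
      = MvPolynomial.aeval ![(ratPoint P t).1, (ratPoint P t).2] f := by
  have hval : ((MvPolynomial.aeval ![(⟨P.1, h₁⟩ : regularAt t), ⟨P.2, h₂⟩] f : regularAt t) :
      RatFunc K) = MvPolynomial.aeval ![P.1, P.2] f :=
    map_mvAeval (regularAt t).val (⟨P.1, h₁⟩, ⟨P.2, h₂⟩) f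
  rw [← hval]
  exact map_mvAeval (evalAt t) (⟨P.1, h₁⟩, ⟨P.2, h₂⟩) f

theorem evalPair_eq_zero_of_paramImage_subset [Infinite K] {φ : RatFunc K × RatFunc K}
    {g : K[X][X]} (h : paramImage φ ⊆ zeroSetP g) : evalPair φ g = 0 := by
  refine eq_zero_of_eventually_eval_eq_zero ?_
  filter_upwards [eventually_mem_regularAt φ.1, eventually_mem_regularAt φ.2] with t h₁ h₂
  rw [eval_evalPair h₁ h₂]
  exact mem_zeroSetP_iff.mp (h ⟨t, ⟨h₁, h₂⟩, rfl⟩)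

theorem mvAeval_eq_zero_of_paramImage_subset [Infinite K] {P : RatFunc K × RatFunc K}
    {f : MvPolynomial (Fin 2) K} (h : paramImage P ⊆ zeroSet f) :
    MvPolynomial.aeval ![P.1, P.2] f = 0 := by
  refine eq_zero_of_eventually_eval_eq_zero ?_
  filter_upwards [eventually_mem_regularAt P.1, eventually_mem_regularAt P.2] with t h₁ h₂
  rw [eval_mvAeval h₁ h₂]
  exact mem_zeroSet_iff.mp (h ⟨t, ⟨h₁, h₂⟩, rfl⟩)

section Substitution

variable {ψ : RatFunc K} (hψ : ¬∃ c, ψ = RatFunc.C c)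
include hψ

theorem aeval_injective_of_ne_C : Function.Injective (aeval ψ : K[X] →ₐ[K] RatFunc K) :=
  transcendental_iff_injective.mp (ψ.transcendental_of_ne_C hψ)

def compAlgHom : RatFunc K →ₐ[K] RatFunc K :=
  RatFunc.liftAlgHom (aeval ψ)
    (nonZeroDivisors_le_comap_nonZeroDivisors_of_injective _ (aeval_injective_of_ne_C hψ))

theorem compAlgHom_apply (x : RatFunc K) : compAlgHom hψ x = comp x ψ :=
  RatFunc.liftAlgHom_apply _ _ x

theorem compAlgHom_C (c : K) : compAlgHom hψ (RatFunc.C c) = RatFunc.C c := by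
  rw [← RatFunc.algebraMap_eq_C, AlgHom.commutes]

theorem aeval_num_eq_compAlgHom_mul (x : RatFunc K) :
    aeval ψ x.num = compAlgHom hψ x * aeval ψ x.denom := by
  rw [compAlgHom_apply, comp, div_mul_cancel₀]
  exact (map_ne_zero_iff _ (aeval_injective_of_ne_C hψ)).mpr x.denom_ne_zero

theorem compAlgHom_relation_of_evalPair_repNum_eq_zero {w : RatFunc K} {A : K × K}
    {P : RatFunc K × RatFunc K} (h : evalPair (ψ, w) (repNum A P) = 0) :
    compAlgHom hψ (P.2 - RatFunc.C A.2) * (w ^ 2 - 1)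
      = 2 * compAlgHom hψ (P.1 - RatFunc.C A.1) * w := by
  set u := P.1 - RatFunc.C A.1 with hu
  set v := P.2 - RatFunc.C A.2 with hv
  have hexp : evalPair (ψ, w) (repNum A P) = aeval ψ (u.denom * v.denom) *
      (compAlgHom hψ v * (w ^ 2 - 1) - 2 * compAlgHom hψ u * w) := by
    rw [repNum, ← hu, ← hv]
    simp only [evalPair, coe_eval₂RingHom, eval₂_add, eval₂_mul, eval₂_C, eval₂_X, eval₂_sub,
      eval₂_X_pow, eval₂_one, eval₂_neg, eval₂_ofNat, AlgHom.toRingHom_eq_coe, RingHom.coe_coe,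
      map_mul, map_neg, map_ofNat, aeval_num_eq_compAlgHom_mul hψ u, aeval_num_eq_compAlgHom_mul hψ v]
    ring
  have hden : aeval ψ (u.denom * v.denom) ≠ 0 :=
    (map_ne_zero_iff _ (aeval_injective_of_ne_C hψ)).mpr
      (mul_ne_zero u.denom_ne_zero v.denom_ne_zero)
  rw [hexp, mul_eq_zero, sub_eq_zero] at h
  exact h.resolve_left hden

end Substitution

theorem map_evalRingHom_ne_zero_of_isPrimitive {p : K[X][X]} (hp : p.IsPrimitive) (c : K) :
    p.map (evalRingHom c) ≠ 0 := by
  intro h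
  refine not_isUnit_X_sub_C c (hp _ ((C_dvd_iff_dvd_coeff _ _).mpr fun i => ?_))
  rw [dvd_iff_isRoot]
  simpa using congrArg (coeff · i) h

theorem evalPair_C (c : K) (w : RatFunc K) (g : K[X][X]) :
    evalPair (RatFunc.C c, w) g = aeval w (g.map (evalRingHom c)) := by
  rw [evalPair, coe_eval₂RingHom, aeval_def, eval₂_map]
  congr 1
  ext <;> simp [RatFunc.algebraMap_eq_C]

theorem fst_ne_C_of_evalPair_eq_zero {g : K[X][X]} (hg : g.IsPrimitive) {φ₁ φ₂ : RatFunc K}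
    (hφ : ¬∃ c : K × K, φ₁ = RatFunc.C c.1 ∧ φ₂ = RatFunc.C c.2)
    (h : evalPair (φ₁, φ₂) g = 0) : ¬∃ c, φ₁ = RatFunc.C c := by
  rintro ⟨c, rfl⟩
  have hφ₂ : ¬∃ c₂, φ₂ = RatFunc.C c₂ := fun ⟨c₂, hc₂⟩ => hφ ⟨(c, c₂), rfl, hc₂⟩
  rw [evalPair_C, map_eq_zero_iff _ (aeval_injective_of_ne_C hφ₂)] at h
  exact map_evalRingHom_ne_zero_of_isPrimitive hg c h

theorem isLineThrough_of_snd_eq_C [Infinite K] {f : MvPolynomial (Fin 2) K} {A : K × K}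
    {P : RatFunc K × RatFunc K} (hP : IsParamOf (zeroSet f) P) (h : P.2 = RatFunc.C A.2) :
    IsLineThrough (zeroSet f) A := by
  obtain ⟨hnc, himage, hdense⟩ := hP
  have hP₁ : ¬∃ c, P.1 = RatFunc.C c := fun ⟨c, hc⟩ => hnc ⟨(c, A.2), hc, h⟩
  have hF : MvPolynomial.aeval ![X, Polynomial.C A.2] f = 0 := by
    apply aeval_injective_of_ne_C hP₁
    rw [map_mvAeval (aeval P.1) (X, Polynomial.C A.2), map_zero]
    simpa [h, RatFunc.algebraMap_eq_C] using mvAeval_eq_zero_of_paramImage_subset himage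
  refine ⟨0, 1, Or.inr one_ne_zero, Set.ext fun y => ?_⟩
  simp only [zero_mul, zero_add, one_mul, sub_eq_zero, Set.mem_ofPred_eq]
  constructor
  · intro hy
    have hsnd := hdense hy (MvPolynomial.X 1 - MvPolynomial.C A.2) <| by
      rintro _ ⟨t, -, rfl⟩
      simp [ratPoint_eq, h]
    simpa [sub_eq_zero] using hsnd
  · intro hy
    have := congrArg (aeval y.1) hF
    rw [map_mvAeval (aeval y.1) (X, Polynomial.C A.2)] at this
    simpa [mem_zeroSet_iff, hy] using this

theorem sq_add_sq_eq_of_mul_sq_sub_one_eq {F : Type*} [Field F] [NeZero (2 : F)] {u v w : F}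
    (hw : w ≠ 0) (h : v * (w ^ 2 - 1) = 2 * u * w) :
    u ^ 2 + v ^ 2 = ((w ^ 2 + 1) ^ 2 / (2 * w) ^ 2) * v ^ 2 := by
  field_simp
  linear_combination (-(2 * w * u + (w ^ 2 - 1) * v)) * h

theorem reparametrization_by_rational_component_is_rdf_general
    [CharZero K]
    (f : MvPolynomial (Fin 2) K) (A : K × K)
    (hline : ¬ IsLineThrough (zeroSet f) A)
    (P : RatFunc K × RatFunc K) (hP : IsParamOf (zeroSet f) P)
    (g : Polynomial (Polynomial K)) (hgdvd : g ∣ repPoly A P)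
    (φ₁ φ₂ : RatFunc K) (hφ : IsParamOf (zeroSetP g) (φ₁, φ₂)) :
    IsRDF A (comp P.1 φ₁, comp P.2 φ₁) ∧ φ₂ ≠ 0 ∧
    (comp P.1 φ₁ - RatFunc.C A.1) ^ 2 + (comp P.2 φ₁ - RatFunc.C A.2) ^ 2 =
      ((φ₂ ^ 2 + 1) ^ 2 / (2 * φ₂) ^ 2) * (comp P.2 φ₁ - RatFunc.C A.2) ^ 2 := by
  obtain ⟨hφnc, hφim, -⟩ := hφ
  have hg : evalPair (φ₁, φ₂) g = 0 := evalPair_eq_zero_of_paramImage_subset hφim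
  have hφ₁ : ¬∃ c, φ₁ = RatFunc.C c :=
    fst_ne_C_of_evalPair_eq_zero (isPrimitive_of_dvd (isPrimitive_primPart _) hgdvd) hφnc hg
  have hrep : evalPair (φ₁, φ₂) (repNum A P) = 0 := by
    obtain ⟨q, hq⟩ := hgdvd.trans (primPart_dvd _)
    rw [hq, map_mul, hg, zero_mul]
  have hkey := compAlgHom_relation_of_evalPair_repNum_eq_zero hφ₁ hrep
  have hφ₂ : φ₂ ≠ 0 := by
    rintro rfl
    have hv : compAlgHom hφ₁ (P.2 - RatFunc.C A.2) = 0 := by linear_combination -hkey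
    rw [map_eq_zero, sub_eq_zero] at hv
    exact hline (isLineThrough_of_snd_eq_C hP hv)
  rw [map_sub, map_sub, compAlgHom_C, compAlgHom_C, compAlgHom_apply, compAlgHom_apply] at hkey
  have hsq := sq_add_sq_eq_of_mul_sq_sub_one_eq hφ₂ hkey
  refine ⟨⟨(φ₂ ^ 2 + 1) / (2 * φ₂) * (comp P.2 φ₁ - RatFunc.C A.2), ?_⟩, hφ₂, hsq⟩
  exact hsq.trans (by ring)

/-- Corollary 2 of the paper. If `𝔊(P)` has a rational component `M`
parametrized by `(φ₁, φ₂)`, then `P(φ₁(t))` is `A`-rdf; explicitly `φ₂ ≠ 0` and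
`(P₁(φ₁)−a)² + (P₂(φ₁)−b)² = ((φ₂²+1)²/(2φ₂)²)·(P₂(φ₁)−b)²`. -/
theorem reparametrization_by_rational_component_is_rdf
    [IsAlgClosed K] [CharZero K]
    (f : MvPolynomial (Fin 2) K) (A : K × K)
    (hf : Irreducible f)
    (hiso : ¬ IsIsotropicLine (zeroSet f))
    (hline : ¬ IsLineThrough (zeroSet f) A)
    (P : RatFunc K × RatFunc K) (hP : IsParamOf (zeroSet f) P)
    (g : Polynomial (Polynomial K)) (hg : Irreducible g) (hgdvd : g ∣ repPoly A P)
    (φ₁ φ₂ : RatFunc K) (hφ : IsParamOf (zeroSetP g) (φ₁, φ₂)) :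
    IsRDF A (comp P.1 φ₁, comp P.2 φ₁) ∧ φ₂ ≠ 0 ∧
    (comp P.1 φ₁ - RatFunc.C A.1) ^ 2 + (comp P.2 φ₁ - RatFunc.C A.2) ^ 2 =
      ((φ₂ ^ 2 + 1) ^ 2 / (2 * φ₂) ^ 2) * (comp P.2 φ₁ - RatFunc.C A.2) ^ 2 :=
  reparametrization_by_rational_component_is_rdf_general f A hline P hP g hgdvd φ₁ φ₂ hφ

end ConchoidPaper
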